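/- Let 𝒢 = 𝒢(G,H,S) be a Cayley coset digraph whose generators are distinct double-coset representatives, with S nonempty. If for every s ∈ S the subgroup generated by H ∪ {s} is all of G, then 𝒢 is optimally vertex connected, i.e., κ(𝒢) = d where d = Σ_{s∈S} |HsH/H|. -/
import Mathlib


open Classical

/-- A digraph (given by its edge relation `E`) is strongly connected iff for every
ordered pair of vertices there is a directed path from the first to the second. -/
def SC {V : Type*} (E : V → V → Prop) : Prop :=
  ∀ a b : V, Relation.ReflTransGen E a b

/-- The subdigraph induced on `A` is strongly connected. -/
def SCOn {V : Type*} (E : V → V → Prop) (A : Set V) : Prop :=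
  ∀ a ∈ A, ∀ b ∈ A, Relation.ReflTransGen (fun x y => x ∈ A ∧ y ∈ A ∧ E x y) a b

/-- Out-neighborhood of a set of vertices. -/
def Nout {V : Type*} (E : V → V → Prop) (A : Set V) : Set V :=
  {x | x ∉ A ∧ ∃ y ∈ A, E y x}

/-- Vertex connectivity: the least cardinality of a set `T` of vertices whose removal
leaves a non-strongly-connected digraph; `Nat.card V - 1` if no such `T` exists. -/
noncomputable def kappa {V : Type*} [Finite V] (E : V → V → Prop) : ℕ :=
  if ∃ T : Set V, ¬ SCOn E Tᶜ then
    sInf {m | ∃ T : Set V, T.ncard = m ∧ ¬ SCOn E Tᶜ}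
  else Nat.card V - 1

/-- A part of a digraph. -/
def IsPart {V : Type*} (E : V → V → Prop) (A : Set V) : Prop :=
  A.Nonempty ∧ ((A ∪ Nout E A)ᶜ : Set V).Nonempty

/-- An atom: a part with `|N(A)| = κ` of minimum cardinality among such parts. -/
def IsAtomD {V : Type*} [Finite V] (E : V → V → Prop) (A : Set V) : Prop :=
  IsPart E A ∧ (Nout E A).ncard = kappa E ∧
    ∀ B : Set V, IsPart E B → (Nout E B).ncard = kappa E → A.ncard ≤ B.ncard
/-- The double coset `K s K`. -/
def dcoset {G : Type*} [Group G] (K : Subgroup G) (s : G) : Set G :=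
  {g | ∃ h₁ ∈ K, ∃ h₂ ∈ K, g = h₁ * s * h₂}

/-- Edge relation of the Cayley coset digraph `𝒢(G,H,S)` on the left cosets `G ⧸ H`:
there is an edge from `g₁H` to `g₂H` iff `g₁⁻¹g₂ ∈ HsH` for some `s ∈ S`
(equivalently, `g₁Hs ∩ g₂H ≠ ∅`). -/
def cayleyRel {G : Type*} [Group G] (H : Subgroup G) (S : Set G) :
    G ⧸ H → G ⧸ H → Prop :=
  fun x y => ∃ s ∈ S, ∃ g₁ g₂ : G, (g₁ : G ⧸ H) = x ∧ (g₂ : G ⧸ H) = y ∧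
    g₁⁻¹ * g₂ ∈ dcoset H s

/-- `d_s = |HsH/H|`, the number of left cosets of `H` contained in `HsH`. -/
noncomputable def dval {G : Type*} [Group G] (H : Subgroup G) (s : G) : ℕ :=
  ((QuotientGroup.mk '' dcoset H s : Set (G ⧸ H))).ncard


section Aux
set_option linter.unusedSectionVars false
section Digraph

variable {V : Type*} [Finite V] (E : V → V → Prop)

lemma nout_disj (A : Set V) : Disjoint A (Nout E A) := by
  rw [Set.disjoint_right]; rintro x ⟨hx, -⟩; exact hx

lemma SCOn_flip (A : Set V) : SCOn (Function.swap E) A ↔ SCOn E A := by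
  have key : ∀ (F : V → V → Prop) (a b : V),
      Relation.ReflTransGen (fun x y => x ∈ A ∧ y ∈ A ∧ F x y) a b →
      Relation.ReflTransGen (fun x y => x ∈ A ∧ y ∈ A ∧ Function.swap F x y) b a := by
    intro F a b h
    induction h with
    | refl => exact Relation.ReflTransGen.refl
    | tail _ h ih => exact Relation.ReflTransGen.head ⟨h.2.1, h.1, h.2.2⟩ ih
  constructor
  · intro h a ha b hb
    have := key (Function.swap E) b a (h b hb a ha)
    simpa [Function.swap] using this
  · intro h a ha b hb
    exact key E b a (h b hb a ha)

lemma kappa_flip : kappa (Function.swap E) = kappa E := by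
  unfold kappa
  simp only [SCOn_flip]

/-- boundary of any part is at least κ -/
lemma part_to_cut {P : Set V} (h : IsPart E P) : ¬ SCOn E (Nout E P)ᶜ := by
  obtain ⟨⟨a, ha⟩, ⟨c, hc⟩⟩ := h
  intro hSC
  have haT : a ∈ (Nout E P)ᶜ := fun hmem => hmem.1 ha
  have hcT : c ∈ (Nout E P)ᶜ := fun hmem => hc (Set.mem_union_right _ hmem)
  have hpath := hSC a haT c hcT
  have : ∀ x, Relation.ReflTransGen
      (fun x y => x ∈ (Nout E P)ᶜ ∧ y ∈ (Nout E P)ᶜ ∧ E x y) a x → x ∈ P := by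
    intro x hx
    induction hx with
    | refl => exact ha
    | tail _ h ih =>
      by_contra hnot
      exact h.2.1 ⟨hnot, _, ih, h.2.2⟩
  exact hc (Set.mem_union_left _ (this c hpath))

lemma kappa_le_part {P : Set V} (h : IsPart E P) : kappa E ≤ (Nout E P).ncard := by
  have hcut : ∃ T : Set V, ¬ SCOn E Tᶜ := ⟨Nout E P, part_to_cut E h⟩
  rw [kappa, if_pos hcut]
  exact Nat.sInf_le ⟨Nout E P, rfl, part_to_cut E h⟩

lemma submod (A B : Set V) :
    (Nout E (A ∩ B)).ncard + (Nout E (A ∪ B)).ncard ≤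
      (Nout E A).ncard + (Nout E B).ncard := by
  set f : Set V → Set V := fun X => X ∪ {y | ∃ x ∈ X, E x y} with hf
  have hXf : ∀ X : Set V, X ∪ Nout E X = f X := by
    intro X; ext y; simp only [hf, Nout, Set.mem_union, Set.mem_setOf_eq]; tauto
  have hcard : ∀ X : Set V, (f X).ncard = X.ncard + (Nout E X).ncard := by
    intro X
    rw [← hXf, Set.ncard_union_eq (nout_disj E X) (Set.toFinite _) (Set.toFinite _)]
  have h1 : f (A ∩ B) ⊆ f A ∩ f B := by
    rintro y (hy | ⟨x, hx, hE⟩)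
    · exact ⟨Or.inl hy.1, Or.inl hy.2⟩
    · exact ⟨Or.inr ⟨x, hx.1, hE⟩, Or.inr ⟨x, hx.2, hE⟩⟩
  have h2 : f (A ∪ B) = f A ∪ f B := by
    simp only [hf]; ext y
    simp only [Set.mem_union, Set.mem_setOf_eq]
    constructor
    · rintro (( h | h) | ⟨x, (hx|hx), hE⟩)
      · exact Or.inl (Or.inl h)
      · exact Or.inr (Or.inl h)
      · exact Or.inl (Or.inr ⟨x, hx, hE⟩)
      · exact Or.inr (Or.inr ⟨x, hx, hE⟩)
    · rintro ((h | ⟨x, hx, hE⟩) | (h | ⟨x, hx, hE⟩))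
      · exact Or.inl (Or.inl h)
      · exact Or.inr ⟨x, Or.inl hx, hE⟩
      · exact Or.inl (Or.inr h)
      · exact Or.inr ⟨x, Or.inr hx, hE⟩
  have hsub : (f (A ∩ B)).ncard + (f (A ∪ B)).ncard ≤ (f A).ncard + (f B).ncard := by
    have e1 : (f A ∩ f B).ncard + (f A ∪ f B).ncard = (f A).ncard + (f B).ncard :=
      Set.ncard_inter_add_ncard_union _ _ (Set.toFinite _) (Set.toFinite _)
    have e2 : (f (A ∩ B)).ncard ≤ (f A ∩ f B).ncard :=
      Set.ncard_le_ncard h1 (Set.toFinite _)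
    rw [h2]; omega
  have e3 : (A ∩ B).ncard + (A ∪ B).ncard = A.ncard + B.ncard :=
    Set.ncard_inter_add_ncard_union _ _ (Set.toFinite _) (Set.toFinite _)
  rw [hcard, hcard, hcard, hcard] at hsub
  omega

lemma frag_exists (hcut : ∃ T : Set V, ¬ SCOn E Tᶜ) :
    ∃ A : Set V, IsPart E A ∧ (Nout E A).ncard = kappa E := by
  have hk : kappa E = sInf {m | ∃ T : Set V, T.ncard = m ∧ ¬ SCOn E Tᶜ} := by
    rw [kappa, if_pos hcut]
  obtain ⟨T0, hT0⟩ := hcut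
  have hne : {m | ∃ T : Set V, T.ncard = m ∧ ¬ SCOn E Tᶜ}.Nonempty := ⟨_, T0, rfl, hT0⟩
  have hmem := Nat.sInf_mem hne
  obtain ⟨T, hTcard, hTsc⟩ := hmem
  simp only [SCOn, not_forall] at hTsc
  obtain ⟨a, ha, b, hb, hab⟩ := hTsc
  set R : V → V → Prop := fun x y => x ∈ Tᶜ ∧ y ∈ Tᶜ ∧ E x y with hR
  set A : Set V := {x | x ∈ Tᶜ ∧ Relation.ReflTransGen R a x} with hA
  have hAsub : Nout E A ⊆ T := by
    rintro y ⟨hyA, x, hxA, hE⟩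
    by_contra hyT
    exact hyA ⟨hyT, hxA.2.tail ⟨hxA.1, hyT, hE⟩⟩
  refine ⟨A, ⟨⟨a, ha, Relation.ReflTransGen.refl⟩, ⟨b, ?_⟩⟩, ?_⟩
  · intro hmem
    rcases hmem with hb' | hb'
    · exact hab hb'.2
    · exact hb (hAsub hb')
  · refine le_antisymm ?_ ?_
    · calc (Nout E A).ncard ≤ T.ncard := Set.ncard_le_ncard hAsub (Set.toFinite _)
        _ = kappa E := by rw [hTcard, hk]
    · exact kappa_le_part E ⟨⟨a, ha, Relation.ReflTransGen.refl⟩, ⟨b, fun hmem => by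
        rcases hmem with hb' | hb'
        · exact hab hb'.2
        · exact hb (hAsub hb')⟩⟩

lemma atom_exists (hcut : ∃ T : Set V, ¬ SCOn E Tᶜ) : ∃ A : Set V, IsAtomD E A := by
  set 𝒮 : Set ℕ := {m | ∃ A : Set V, (IsPart E A ∧ (Nout E A).ncard = kappa E) ∧ A.ncard = m}
    with h𝒮
  obtain ⟨A0, hA0⟩ := frag_exists E hcut
  have hne : 𝒮.Nonempty := ⟨A0.ncard, A0, hA0, rfl⟩
  obtain ⟨A, ⟨hp, hk⟩, hcard⟩ := Nat.sInf_mem hne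
  exact ⟨A, hp, hk, fun B hB hBk => hcard ▸ Nat.sInf_le ⟨B, ⟨hB, hBk⟩, rfl⟩⟩

end Digraph

section Digraph2

set_option linter.unusedSectionVars false

variable {V : Type*} [Finite V] (E : V → V → Prop)

/-- Key lemma: an atom whose size is at most that of every negative fragment is
contained in every positive fragment it meets. -/
lemma atom_subset_frag {A F : Set V} (hA : IsAtomD E A)
    (hneg : ∀ B : Set V, IsPart (Function.swap E) B →
      (Nout (Function.swap E) B).ncard = kappa E → A.ncard ≤ B.ncard)
    (hF : IsPart E F) (hFk : (Nout E F).ncard = kappa E)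
    (hmeet : (A ∩ F).Nonempty) : A ⊆ F := by
  set κ := kappa E with hκ
  -- N(A∩F) ⊆ A ∪ N(A)
  have hsub1 : Nout E (A ∩ F) ⊆ A ∪ Nout E A := by
    rintro y ⟨hy, x, hx, hE⟩
    by_cases hyA : y ∈ A
    · exact Or.inl hyA
    · exact Or.inr ⟨hyA, x, hx.1, hE⟩
  have hcompl1 : (((A ∩ F) ∪ Nout E (A ∩ F))ᶜ : Set V).Nonempty := by
    refine hA.1.2.mono (Set.compl_subset_compl.2 ?_)
    exact Set.union_subset (Set.inter_subset_left.trans Set.subset_union_left) hsub1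
  have hpart1 : IsPart E (A ∩ F) := ⟨hmeet, hcompl1⟩
  have hk1 : κ ≤ (Nout E (A ∩ F)).ncard := kappa_le_part E hpart1
  have hsubmod := submod E A F
  rw [hA.2.1, hFk] at hsubmod
  by_cases hbig : (((A ∪ F) ∪ Nout E (A ∪ F))ᶜ : Set V).Nonempty
  · -- good case
    have hk2 : κ ≤ (Nout E (A ∪ F)).ncard :=
      kappa_le_part E ⟨hA.1.1.mono Set.subset_union_left, hbig⟩
    have hk1' : (Nout E (A ∩ F)).ncard = κ := by omega
    have hmin := hA.2.2 (A ∩ F) hpart1 hk1'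
    have : A ∩ F = A :=
      Set.eq_of_subset_of_ncard_le Set.inter_subset_left hmin (Set.toFinite _)
    rw [← this]; exact Set.inter_subset_right
  · -- bad case : A ∪ F ∪ N(A∪F) = univ
    exfalso
    have huniv : (A ∪ F) ∪ Nout E (A ∪ F) = Set.univ := by
      rw [Set.not_nonempty_iff_eq_empty, Set.compl_empty_iff] at hbig
      exact hbig
    set Fb : Set V := (F ∪ Nout E F)ᶜ with hFb
    have hFbne : Fb.Nonempty := hF.2
    have hNin_sub : Nout (Function.swap E) Fb ⊆ Nout E F := by
      rintro x ⟨hx, y, hy, hE⟩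
      -- hE : Function.swap E y x = E x y
      have hxFN : x ∈ F ∪ Nout E F := by
        by_contra h; exact hx h
      rcases hxFN with hxF | hxN
      · exfalso
        apply hy
        by_cases hyF : y ∈ F
        · exact Or.inl hyF
        · exact Or.inr ⟨hyF, x, hxF, hE⟩
      · exact hxN
    have hFbpart : IsPart (Function.swap E) Fb := by
      refine ⟨hFbne, ?_⟩
      obtain ⟨a, ha⟩ := hF.1
      refine ⟨a, ?_⟩
      rintro (h | h)
      · exact h (Or.inl ha)
      · rcases hNin_sub h with ⟨h', -⟩; exact h' ha
    have hNinκ : (Nout (Function.swap E) Fb).ncard = κ := by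
      refine le_antisymm ?_ ?_
      · calc (Nout (Function.swap E) Fb).ncard ≤ (Nout E F).ncard :=
            Set.ncard_le_ncard hNin_sub (Set.toFinite _)
          _ = κ := hFk
      · have := kappa_le_part (Function.swap E) hFbpart
        rwa [kappa_flip] at this
    have hAFb : A.ncard ≤ Fb.ncard := hneg Fb hFbpart hNinκ
    -- counting
    have hdisj1 : Disjoint (F ∪ Nout E F) Fb := Set.disjoint_compl_right_iff_subset.2 le_rfl
    have n1 : F.ncard + (Nout E F).ncard + Fb.ncard = Nat.card V := by
      have e1 : ((F ∪ Nout E F) ∪ Fb) = Set.univ := by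
        rw [hFb, Set.union_compl_self]
      have e2 : ((F ∪ Nout E F) ∪ Fb).ncard = (F ∪ Nout E F).ncard + Fb.ncard :=
        Set.ncard_union_eq hdisj1 (Set.toFinite _) (Set.toFinite _)
      have e3 : (F ∪ Nout E F).ncard = F.ncard + (Nout E F).ncard :=
        Set.ncard_union_eq (nout_disj E F) (Set.toFinite _) (Set.toFinite _)
      rw [e1, Set.ncard_univ] at e2
      omega
    have n2 : (A ∪ F).ncard + (Nout E (A ∪ F)).ncard = Nat.card V := by
      have e2 : ((A ∪ F) ∪ Nout E (A ∪ F)).ncard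
          = (A ∪ F).ncard + (Nout E (A ∪ F)).ncard :=
        Set.ncard_union_eq (nout_disj E _) (Set.toFinite _) (Set.toFinite _)
      rw [huniv, Set.ncard_univ] at e2
      omega
    have n4 : (A ∪ F).ncard + (A ∩ F).ncard = A.ncard + F.ncard :=
      Set.ncard_union_add_ncard_inter _ _ (Set.toFinite _) (Set.toFinite _)
    have hpos : 0 < (A ∩ F).ncard := (Set.ncard_pos (Set.toFinite _)).2 hmeet
    rw [hFk] at *
    omega

variable {φ : Equiv.Perm V} (hφ : ∀ x y : V, E (φ x) (φ y) ↔ E x y)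

include hφ

lemma Nout_image (A : Set V) : Nout E (φ '' A) = φ '' Nout E A := by
  ext y
  constructor
  · rintro ⟨hy, x, ⟨a, ha, rfl⟩, hE⟩
    refine ⟨φ.symm y, ⟨fun hmem => hy ?_, a, ha, ?_⟩, by simp⟩
    · exact ⟨φ.symm y, hmem, by simp⟩
    · rw [← hφ]; simpa using hE
  · rintro ⟨b, ⟨hb, x, hx, hE⟩, rfl⟩
    refine ⟨fun hmem => ?_, φ x, ⟨x, hx, rfl⟩, (hφ x b).2 hE⟩
    obtain ⟨a, ha, hab⟩ := hmem
    rw [φ.injective.eq_iff] at hab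
    exact hb (hab ▸ ha)

lemma IsPart_image {A : Set V} (h : IsPart E A) : IsPart E (φ '' A) := by
  obtain ⟨⟨a, ha⟩, ⟨c, hc⟩⟩ := h
  refine ⟨⟨φ a, a, ha, rfl⟩, ⟨φ c, ?_⟩⟩
  rw [Nout_image E hφ, ← Set.image_union]
  rintro ⟨x, hx, hxc⟩
  rw [φ.injective.eq_iff] at hxc
  exact hc (hxc ▸ hx)

lemma IsAtomD_image {A : Set V} (h : IsAtomD E A) : IsAtomD E (φ '' A) := by
  obtain ⟨hp, hk, hmin⟩ := h
  refine ⟨IsPart_image E hφ hp, ?_, ?_⟩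
  · rw [Nout_image E hφ, Set.ncard_image_of_injective _ φ.injective, hk]
  · intro B hB hBk
    rw [Set.ncard_image_of_injective _ φ.injective]
    exact hmin B hB hBk

end Digraph2

section GroupLemmas

set_option linter.unusedSectionVars false

variable {G : Type*} [Group G]

lemma mem_dcoset_iff {H : Subgroup G} {s x : G} :
    x ∈ dcoset H s ↔ ∃ h₁ ∈ H, ∃ h₂ ∈ H, x = h₁ * s * h₂ := Iff.rfl

lemma self_mem_dcoset (H : Subgroup G) (s : G) : s ∈ dcoset H s :=
  ⟨1, H.one_mem, 1, H.one_mem, by simp⟩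

lemma dcoset_mul_right {H : Subgroup G} {s x h : G} (hx : x ∈ dcoset H s) (hh : h ∈ H) :
    x * h ∈ dcoset H s := by
  obtain ⟨h₁, hh₁, h₂, hh₂, rfl⟩ := hx
  exact ⟨h₁, hh₁, h₂ * h, H.mul_mem hh₂ hh, by group⟩

lemma dcoset_mul_left {H : Subgroup G} {s x h : G} (hx : x ∈ dcoset H s) (hh : h ∈ H) :
    h * x ∈ dcoset H s := by
  obtain ⟨h₁, hh₁, h₂, hh₂, rfl⟩ := hx
  exact ⟨h * h₁, H.mul_mem hh hh₁, h₂, hh₂, by group⟩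

lemma mem_dcoset_symm {H : Subgroup G} {s x : G} (hx : x ∈ dcoset H s) :
    s ∈ dcoset H x := by
  obtain ⟨h₁, hh₁, h₂, hh₂, rfl⟩ := hx
  exact ⟨h₁⁻¹, H.inv_mem hh₁, h₂⁻¹, H.inv_mem hh₂, by group⟩

lemma dcoset_trans {H : Subgroup G} {s x y : G} (hxy : y ∈ dcoset H x)
    (hx : x ∈ dcoset H s) : y ∈ dcoset H s := by
  obtain ⟨h₁, hh₁, h₂, hh₂, rfl⟩ := hxy
  exact dcoset_mul_right (dcoset_mul_left hx hh₁) hh₂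

lemma dcoset_eq_of_inter {H : Subgroup G} {s t x : G} (hs : x ∈ dcoset H s)
    (ht : x ∈ dcoset H t) : dcoset H s = dcoset H t := by
  ext y
  constructor
  · intro hy
    exact dcoset_trans (dcoset_trans hy (mem_dcoset_symm hs)) ht
  · intro hy
    exact dcoset_trans (dcoset_trans hy (mem_dcoset_symm ht)) hs

lemma mem_dcoset_inv {H : Subgroup G} {s x : G} :
    x ∈ dcoset H s⁻¹ ↔ x⁻¹ ∈ dcoset H s := by
  constructor
  · rintro ⟨h₁, hh₁, h₂, hh₂, rfl⟩
    exact ⟨h₂⁻¹, H.inv_mem hh₂, h₁⁻¹, H.inv_mem hh₁, by group⟩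
  · intro h
    obtain ⟨h₁, hh₁, h₂, hh₂, hx⟩ := h
    refine ⟨h₂⁻¹, H.inv_mem hh₂, h₁⁻¹, H.inv_mem hh₁, ?_⟩
    have : x = (h₁ * s * h₂)⁻¹ := by rw [← hx]; simp
    rw [this]; group

lemma dcoset_inv_eq_image (H : Subgroup G) (s : G) :
    dcoset H s⁻¹ = (·⁻¹) '' dcoset H s := by
  ext x
  rw [mem_dcoset_inv]
  constructor
  · intro h; exact ⟨x⁻¹, h, by simp⟩
  · rintro ⟨y, hy, rfl⟩; simpa using hy

lemma dcoset_saturated (H : Subgroup G) (s : G) :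
    QuotientGroup.mk ⁻¹' (QuotientGroup.mk '' dcoset H s : Set (G ⧸ H)) = dcoset H s := by
  ext x
  simp only [Set.mem_preimage, Set.mem_image]
  constructor
  · rintro ⟨y, hy, hxy⟩
    have : y⁻¹ * x ∈ H := by rwa [QuotientGroup.eq] at hxy
    have := dcoset_mul_right hy this
    simpa [mul_assoc] using this
  · intro hx; exact ⟨x, hx, rfl⟩

variable [Finite G]

lemma card_dcoset (H : Subgroup G) (s : G) :
    (dcoset H s).ncard = Nat.card H * dval H s := by
  have e1 := Nat.card_congr (QuotientGroup.preimageMkEquivSubgroupProdSet H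
    (QuotientGroup.mk '' dcoset H s : Set (G ⧸ H)))
  rw [dcoset_saturated, Nat.card_prod] at e1
  rw [← Nat.card_coe_set_eq, e1, dval, Nat.card_coe_set_eq]

lemma dval_inv (H : Subgroup G) (s : G) : dval H s⁻¹ = dval H s := by
  have e1 := card_dcoset H s
  have e2 := card_dcoset H s⁻¹
  have e3 : (dcoset H s⁻¹).ncard = (dcoset H s).ncard := by
    rw [dcoset_inv_eq_image, Set.ncard_image_of_injective _ inv_injective]
  have hH : 0 < Nat.card H := Nat.card_pos
  rw [e1, e2] at e3
  exact Nat.eq_of_mul_eq_mul_left hH e3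

end GroupLemmas

section Cayley

set_option linter.unusedSectionVars false

open QuotientGroup

variable {G : Type*} [Group G] [Finite G] (H : Subgroup G)

lemma smul_mk' (g a : G) :
    g • (QuotientGroup.mk a : G ⧸ H) = QuotientGroup.mk (g * a) := by
  have := MulAction.Quotient.smul_mk H g a
  simpa [smul_eq_mul] using this

lemma cayleyRel_smul_aux (S : Set G) (g : G) {x y : G ⧸ H}
    (h : cayleyRel H S x y) : cayleyRel H S (g • x) (g • y) := by
  obtain ⟨s, hs, g₁, g₂, h1, h2, hd⟩ := h
  refine ⟨s, hs, g * g₁, g * g₂, ?_, ?_, ?_⟩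
  · rw [← h1, ← smul_mk']
  · rw [← h2, ← smul_mk']
  · have : (g * g₁)⁻¹ * (g * g₂) = g₁⁻¹ * g₂ := by group
    rw [this]; exact hd

lemma cayleyRel_smul (S : Set G) (g : G) (x y : G ⧸ H) :
    cayleyRel H S ((MulAction.toPerm g : Equiv.Perm (G ⧸ H)) x)
      ((MulAction.toPerm g : Equiv.Perm (G ⧸ H)) y) ↔ cayleyRel H S x y := by
  constructor
  · intro h
    have := cayleyRel_smul_aux H S g⁻¹ h
    simpa [MulAction.toPerm] using this
  · intro h
    exact cayleyRel_smul_aux H S g h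

lemma dcoset_subset_of_mem {x : G} (hx : x ∈ H) : dcoset H x ⊆ (H : Set G) := by
  rintro y ⟨h₁, hh₁, h₂, hh₂, rfl⟩
  exact H.mul_mem (H.mul_mem hh₁ hx) hh₂

lemma cayley_one_iff (S : Set G) (y : G ⧸ H) :
    cayleyRel H S ((1 : G) : G ⧸ H) y ↔
      ∃ s ∈ S, y ∈ QuotientGroup.mk '' dcoset H s := by
  constructor
  · rintro ⟨s, hs, g₁, g₂, h1, h2, hd⟩
    have hg₁ : g₁ ∈ H := by
      have := (QuotientGroup.eq (s := H)).1 h1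
      simpa using H.inv_mem this
    refine ⟨s, hs, g₂, ?_, h2⟩
    have := dcoset_mul_left hd hg₁
    simpa [mul_assoc] using this
  · rintro ⟨s, hs, x, hx, rfl⟩
    exact ⟨s, hs, 1, x, rfl, rfl, by simpa using hx⟩

lemma mk_one_notMem {s : G} (hs : s ∉ H) :
    ((1 : G) : G ⧸ H) ∉ QuotientGroup.mk '' dcoset H s := by
  rintro ⟨x, hx, hx1⟩
  have hxH : x ∈ H := by
    have := (QuotientGroup.eq (s := H)).1 hx1
    simpa using H.inv_mem this
  exact hs (dcoset_subset_of_mem H hxH (mem_dcoset_symm hx))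

lemma Nout_one (S : Finset G) (hSH : ∀ s ∈ S, s ∉ H) :
    Nout (cayleyRel H (S : Set G)) {((1 : G) : G ⧸ H)} =
      ⋃ s ∈ (S : Set G), QuotientGroup.mk '' dcoset H s := by
  ext y
  constructor
  · rintro ⟨hy, z, hz, hE⟩
    rw [Set.mem_singleton_iff] at hz
    subst hz
    obtain ⟨s, hs, hmem⟩ := (cayley_one_iff H (S : Set G) y).1 hE
    exact Set.mem_biUnion hs hmem
  · intro hy
    obtain ⟨s, hs, hmem⟩ := Set.mem_iUnion₂.1 hy
    refine ⟨?_, ((1 : G) : G ⧸ H), rfl, (cayley_one_iff H _ y).2 ⟨s, hs, hmem⟩⟩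
    rw [Set.mem_singleton_iff]
    rintro rfl
    exact mk_one_notMem H (hSH s hs) hmem

lemma mkdc_disjoint {S : Finset G}
    (hdc : ∀ s ∈ S, ∀ t ∈ S, s ≠ t → dcoset H s ≠ dcoset H t)
    {s t : G} (hs : s ∈ S) (ht : t ∈ S) (hst : s ≠ t) :
    Disjoint (QuotientGroup.mk '' dcoset H s : Set (G ⧸ H))
      (QuotientGroup.mk '' dcoset H t) := by
  rw [Set.disjoint_left]
  rintro y ⟨x, hx, rfl⟩ hyt
  have hx2 : x ∈ dcoset H t := by
    rw [← dcoset_saturated H t]; exact hyt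
  exact hdc s hs t ht hst (dcoset_eq_of_inter hx hx2)

lemma ncard_biUnion_dcosets (S : Finset G)
    (hdc : ∀ s ∈ S, ∀ t ∈ S, s ≠ t → dcoset H s ≠ dcoset H t) :
    (⋃ s ∈ (S : Set G), (QuotientGroup.mk '' dcoset H s : Set (G ⧸ H))).ncard
      = ∑ s ∈ S, dval H s := by
  classical
  induction S using Finset.induction_on with
  | empty => simp
  | @insert a S' hnot ih =>
    have hdc' : ∀ s ∈ S', ∀ t ∈ S', s ≠ t → dcoset H s ≠ dcoset H t := by
      intro s hs t ht
      exact hdc s (Finset.mem_insert_of_mem hs) t (Finset.mem_insert_of_mem ht)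
    have hcoe : ((insert a S' : Finset G) : Set G) = insert a (S' : Set G) := by
      simp
    rw [hcoe, Set.biUnion_insert, Finset.sum_insert hnot, ← ih hdc']
    refine Set.ncard_union_eq ?_ (Set.toFinite _) (Set.toFinite _)
    rw [Set.disjoint_iUnion₂_right]
    intro t ht
    exact mkdc_disjoint H hdc (Finset.mem_insert_self a S')
      (Finset.mem_insert_of_mem ht) (fun h => hnot (h ▸ ht))

end Cayley

section GRP

set_option linter.unusedSectionVars false

open QuotientGroup

variable {G : Type*} [Group G] [Finite G]

lemma grp_lower (H : Subgroup G) (S : Finset G)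
    (hSH : ∀ s ∈ S, s ∉ H)
    (hdc : ∀ s ∈ S, ∀ t ∈ S, s ≠ t → dcoset H s ≠ dcoset H t)
    (hgen : ∀ s ∈ S, Subgroup.closure ((H : Set G) ∪ {s}) = ⊤)
    {A : Set (G ⧸ H)} (hA : IsAtomD (cayleyRel H (S : Set G)) A)
    (hneg : ∀ B : Set (G ⧸ H), IsPart (Function.swap (cayleyRel H (S : Set G))) B →
      (Nout (Function.swap (cayleyRel H (S : Set G))) B).ncard
        = kappa (cayleyRel H (S : Set G)) → A.ncard ≤ B.ncard) :
    ∑ s ∈ S, dval H s ≤ kappa (cayleyRel H (S : Set G)) := by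
  set E := cayleyRel H (S : Set G) with hE
  have hφ : ∀ g : G, ∀ x y : G ⧸ H,
      E ((MulAction.toPerm g : Equiv.Perm (G ⧸ H)) x)
        ((MulAction.toPerm g : Equiv.Perm (G ⧸ H)) y) ↔ E x y :=
    fun g => cayleyRel_smul H (S : Set G) g
  obtain ⟨a, ha⟩ := hA.1.1
  obtain ⟨g₀, rfl⟩ := QuotientGroup.mk_surjective a
  set A₁ : Set (G ⧸ H) := (MulAction.toPerm g₀⁻¹ : Equiv.Perm (G ⧸ H)) '' A with hA₁def
  have hA₁ : IsAtomD E A₁ := IsAtomD_image E (hφ g₀⁻¹) hA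
  have hcardA₁ : A₁.ncard = A.ncard :=
    Set.ncard_image_of_injective _ (MulAction.toPerm g₀⁻¹).injective
  have h1A₁ : ((1 : G) : G ⧸ H) ∈ A₁ := by
    refine ⟨QuotientGroup.mk g₀, ha, ?_⟩
    show g₀⁻¹ • (QuotientGroup.mk g₀ : G ⧸ H) = _
    rw [smul_mk']
    simp
  set Ktil : Set G := QuotientGroup.mk ⁻¹' A₁ with hKtil
  have hone : (1 : G) ∈ Ktil := h1A₁
  have hHsub : ∀ h ∈ H, h ∈ Ktil := by
    intro h hh
    have : (QuotientGroup.mk h : G ⧸ H) = ((1 : G) : G ⧸ H) := by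
      rw [QuotientGroup.eq]
      simpa using H.inv_mem hh
    show QuotientGroup.mk h ∈ A₁
    rw [this]; exact h1A₁
  have hmul : ∀ g ∈ Ktil, ∀ g' ∈ Ktil, g * g' ∈ Ktil := by
    intro g hg g' hg'
    set F : Set (G ⧸ H) := (MulAction.toPerm g : Equiv.Perm (G ⧸ H)) '' A₁ with hF
    have hFatom : IsAtomD E F := IsAtomD_image E (hφ g) hA₁
    have hFcard : F.ncard = A.ncard := by
      rw [hF, Set.ncard_image_of_injective _ (MulAction.toPerm g).injective, hcardA₁]
    have hmeet : (F ∩ A₁).Nonempty := by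
      refine ⟨QuotientGroup.mk g, ⟨((1 : G) : G ⧸ H), h1A₁, ?_⟩, hg⟩
      show g • ((1 : G) : G ⧸ H) = _
      rw [smul_mk']; simp
    have hFsub : F ⊆ A₁ := by
      refine atom_subset_frag E hFatom ?_ hA₁.1 hA₁.2.1 hmeet
      intro B hB hBk
      rw [hFcard]
      exact hneg B hB hBk
    have : QuotientGroup.mk (g * g') ∈ F := by
      refine ⟨QuotientGroup.mk g', hg', ?_⟩
      show g • (QuotientGroup.mk g' : G ⧸ H) = _
      rw [smul_mk']
    exact hFsub this
  have hinvK : ∀ g ∈ Ktil, g⁻¹ ∈ Ktil := by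
    intro g hg
    have hpow : ∀ n : ℕ, g ^ n ∈ Ktil := by
      intro n
      induction n with
      | zero => simpa using hone
      | succ k ih => rw [pow_succ]; exact hmul _ ih _ hg
    have hopos : 0 < orderOf g := orderOf_pos g
    have hinv_eq : g⁻¹ = g ^ (orderOf g - 1) := by
      refine inv_eq_of_mul_eq_one_right ?_
      calc g * g ^ (orderOf g - 1) = g ^ (1 + (orderOf g - 1)) := by
            rw [pow_add, pow_one]
        _ = g ^ orderOf g := by congr 1; omega
        _ = 1 := pow_orderOf_eq_one g
    rw [hinv_eq]; exact hpow _
  set K : Subgroup G :=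
    { carrier := Ktil
      one_mem' := hone
      mul_mem' := fun ha hb => hmul _ ha _ hb
      inv_mem' := fun h => hinvK _ h } with hK
  have hKtop : K ≠ ⊤ := by
    intro htop
    obtain ⟨c, hc⟩ := hA₁.1.2
    obtain ⟨x, rfl⟩ := QuotientGroup.mk_surjective c
    have : x ∈ Ktil := by
      have : x ∈ K := htop ▸ Subgroup.mem_top x
      exact this
    exact hc (Set.mem_union_left _ this)
  have hsK : ∀ s ∈ S, s ∉ Ktil := by
    intro s hs hsk
    apply hKtop
    rw [eq_top_iff, ← hgen s hs]
    refine Subgroup.closure_le K |>.2 ?_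
    rintro x (hx | hx)
    · exact hHsub x hx
    · rw [Set.mem_singleton_iff] at hx
      exact hx ▸ hsk
  have hNsub : (⋃ s ∈ (S : Set G), (QuotientGroup.mk '' dcoset H s : Set (G ⧸ H)))
      ⊆ Nout E A₁ := by
    intro y hy
    obtain ⟨s, hs, x, hx, rfl⟩ := Set.mem_iUnion₂.1 hy
    obtain ⟨h₁, hh₁, h₂, hh₂, rfl⟩ := hx
    have hnot : QuotientGroup.mk (h₁ * s * h₂) ∉ A₁ := by
      intro hmem
      have hxK : h₁ * s * h₂ ∈ Ktil := hmem
      have : s ∈ Ktil := by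
        have h1 : h₁⁻¹ ∈ Ktil := hinvK _ (hHsub _ hh₁)
        have h2 : h₂⁻¹ ∈ Ktil := hinvK _ (hHsub _ hh₂)
        have := hmul _ (hmul _ h1 _ hxK) _ h2
        have heq : h₁⁻¹ * (h₁ * s * h₂) * h₂⁻¹ = s := by group
        rwa [heq] at this
      exact hsK s hs this
    refine ⟨hnot, QuotientGroup.mk h₁, hHsub _ hh₁, ?_⟩
    refine ⟨s, hs, h₁, h₁ * s * h₂, rfl, rfl, ?_⟩
    have heq : h₁⁻¹ * (h₁ * s * h₂) = s * h₂ := by group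
    rw [heq]
    exact dcoset_mul_right (self_mem_dcoset H s) hh₂
  calc ∑ s ∈ S, dval H s
      = (⋃ s ∈ (S : Set G), (QuotientGroup.mk '' dcoset H s : Set (G ⧸ H))).ncard :=
        (ncard_biUnion_dcosets H S hdc).symm
    _ ≤ (Nout E A₁).ncard := Set.ncard_le_ncard hNsub (Set.toFinite _)
    _ = kappa E := hA₁.2.1

lemma flip_cayley (H : Subgroup G) (S : Finset G) :
    Function.swap (cayleyRel H (S : Set G))
      = cayleyRel H ((S.image (·⁻¹) : Finset G) : Set G) := by
  funext x y
  show cayleyRel H (S : Set G) y x = _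
  apply propext
  constructor
  · rintro ⟨s, hs, g₁, g₂, h1, h2, hd⟩
    refine ⟨s⁻¹, by rw [Finset.coe_image]; exact ⟨s, Finset.mem_coe.2 hs, rfl⟩, g₂, g₁, h2, h1, ?_⟩
    rw [mem_dcoset_inv]
    simpa using hd
  · rintro ⟨s', hs', g₁, g₂, h1, h2, hd⟩
    simp only [Finset.coe_image, Set.mem_image, Finset.mem_coe] at hs'
    obtain ⟨s, hs, rfl⟩ := hs'
    rw [mem_dcoset_inv] at hd
    exact ⟨s, hs, g₂, g₁, h2, h1, by simpa using hd⟩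

end GRP

end Aux

/-- If for each `s ∈ S` the subgroup generated by `H ∪ {s}` is all of `G`, then the
Cayley coset digraph `𝒢(G,H,S)` (generators distinct double-coset representatives)
is optimally vertex connected: `κ(𝒢) = d = Σ_{s∈S} |HsH/H|`. -/
theorem stmt_8 {G : Type*} [Group G] [Finite G] (H : Subgroup G) (S : Finset G)
    (hne : S.Nonempty)
    (hSH : ∀ s ∈ S, s ∉ H)
    (hdc : ∀ s ∈ S, ∀ t ∈ S, s ≠ t → dcoset H s ≠ dcoset H t)
    (hgen : ∀ s ∈ S, Subgroup.closure ((H : Set G) ∪ {s}) = ⊤) :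
    kappa (cayleyRel H (S : Set G)) = ∑ s ∈ S, dval H s := by
  classical
  set E := cayleyRel H (S : Set G) with hEdef
  set d := ∑ s ∈ S, dval H s with hd
  set n := Nat.card (G ⧸ H) with hn
  have hnpos : 0 < n := Nat.card_pos
  have hNout1 : Nout E {((1 : G) : G ⧸ H)}
      = ⋃ s ∈ (S : Set G), QuotientGroup.mk '' dcoset H s := Nout_one H S hSH
  have hdval : (Nout E {((1 : G) : G ⧸ H)}).ncard = d := by
    rw [hNout1]; exact ncard_biUnion_dcosets H S hdc
  have hd_le : d + 1 ≤ n := by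
    have hdisj : Disjoint {((1 : G) : G ⧸ H)} (Nout E {((1 : G) : G ⧸ H)}) :=
      nout_disj E _
    have he : ({((1 : G) : G ⧸ H)} ∪ Nout E {((1 : G) : G ⧸ H)}).ncard
        = 1 + (Nout E {((1 : G) : G ⧸ H)}).ncard := by
      rw [Set.ncard_union_eq hdisj (Set.toFinite _) (Set.toFinite _), Set.ncard_singleton]
    have hle : ({((1 : G) : G ⧸ H)} ∪ Nout E {((1 : G) : G ⧸ H)}).ncard ≤ n := by
      rw [hn, ← Set.ncard_univ]
      exact Set.ncard_le_ncard (Set.subset_univ _) (Set.toFinite _)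
    rw [he, hdval] at hle; omega
  have hpart_of : d + 1 < n → IsPart E {((1 : G) : G ⧸ H)} := by
    intro hsmall
    refine ⟨Set.singleton_nonempty _, ?_⟩
    rw [Set.nonempty_compl]
    intro hu
    have h1 : ({((1 : G) : G ⧸ H)} ∪ Nout E {((1 : G) : G ⧸ H)}).ncard = n := by
      rw [hu, Set.ncard_univ]
    have h2 : ({((1 : G) : G ⧸ H)} ∪ Nout E {((1 : G) : G ⧸ H)}).ncard
        ≤ 1 + d := by
      calc _ ≤ ({((1 : G) : G ⧸ H)} : Set (G ⧸ H)).ncard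
            + (Nout E {((1 : G) : G ⧸ H)}).ncard := Set.ncard_union_le _ _
        _ = 1 + d := by rw [Set.ncard_singleton, hdval]
    omega
  by_cases hcut : ∃ T : Set (G ⧸ H), ¬ SCOn E Tᶜ
  · have hk : kappa E = sInf {m | ∃ T : Set (G ⧸ H), T.ncard = m ∧ ¬ SCOn E Tᶜ} := by
      rw [kappa, if_pos hcut]
    have hcut' : ∃ T : Set (G ⧸ H), ¬ SCOn (Function.swap E) Tᶜ := by
      obtain ⟨T, hT⟩ := hcut
      exact ⟨T, fun h => hT ((SCOn_flip E _).1 h)⟩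
    obtain ⟨A, hA⟩ := atom_exists E hcut
    obtain ⟨A', hA'⟩ := atom_exists (Function.swap E) hcut'
    have hκflip : kappa (Function.swap E) = kappa E := kappa_flip E
    have hlow : d ≤ kappa E := by
      by_cases hAA' : A.ncard ≤ A'.ncard
      · refine grp_lower H S hSH hdc hgen hA ?_
        intro B hB hBk
        refine hAA'.trans (hA'.2.2 B hB ?_)
        rw [hκflip]; exact hBk
      · push_neg at hAA'
        set S' := S.image (·⁻¹) with hS'
        have hflip : Function.swap E = cayleyRel H (S' : Set G) := flip_cayley H S
        have hSH' : ∀ s ∈ S', s ∉ H := by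
          intro s hs
          simp only [hS', Finset.mem_image] at hs
          obtain ⟨t, ht, rfl⟩ := hs
          intro hmem
          exact hSH t ht (by simpa using H.inv_mem hmem)
        have hdc' : ∀ s ∈ S', ∀ t ∈ S', s ≠ t → dcoset H s ≠ dcoset H t := by
          intro s hs t ht hst heq
          simp only [hS', Finset.mem_image] at hs ht
          obtain ⟨s0, hs0, rfl⟩ := hs
          obtain ⟨t0, ht0, rfl⟩ := ht
          have hst0 : s0 ≠ t0 := fun h => hst (by rw [h])
          apply hdc s0 hs0 t0 ht0 hst0
          rw [dcoset_inv_eq_image, dcoset_inv_eq_image] at heq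
          exact Set.image_injective.2 inv_injective heq
        have hgen' : ∀ s ∈ S', Subgroup.closure ((H : Set G) ∪ {s}) = ⊤ := by
          intro s hs
          simp only [hS', Finset.mem_image] at hs
          obtain ⟨t, ht, hts⟩ := hs
          rw [eq_top_iff, ← hgen t ht]
          refine (Subgroup.closure_le _).2 ?_
          rintro x (hx | hx)
          · exact Subgroup.subset_closure (Or.inl hx)
          · rw [Set.mem_singleton_iff] at hx
            subst hx
            have hs' : s ∈ Subgroup.closure ((H : Set G) ∪ {s}) :=
              Subgroup.subset_closure (Or.inr rfl)
            have hinv := (Subgroup.closure ((H : Set G) ∪ {s})).inv_mem hs'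
            have hts' : x = s⁻¹ := by rw [← hts]; simp
            rw [hts']
            exact hinv
        have hA'2 : IsAtomD (cayleyRel H (S' : Set G)) A' := hflip ▸ hA'
        have hkflip' : kappa (cayleyRel H (S' : Set G)) = kappa E := by
          rw [← hflip]; exact hκflip
        have hneg' : ∀ B : Set (G ⧸ H),
            IsPart (Function.swap (cayleyRel H (S' : Set G))) B →
            (Nout (Function.swap (cayleyRel H (S' : Set G))) B).ncard
              = kappa (cayleyRel H (S' : Set G)) → A'.ncard ≤ B.ncard := by
          intro B hB hBk
          have hswap : Function.swap (cayleyRel H (S' : Set G)) = E := by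
            rw [← hflip]
          rw [hswap] at hB hBk
          rw [hkflip'] at hBk
          exact (hAA'.le.trans (hA.2.2 B hB hBk))
        have hres := grp_lower H S' hSH' hdc' hgen' hA'2 hneg'
        have hsum : ∑ s ∈ S', dval H s = d := by
          rw [hS', Finset.sum_image (fun x _ y _ h => inv_injective h)]
          exact Finset.sum_congr rfl fun s _ => dval_inv H s
        rw [hsum, hkflip'] at hres
        exact hres
    have hup : kappa E ≤ d := by
      by_cases hsmall : d + 1 < n
      · have := kappa_le_part E (hpart_of hsmall)
        rwa [hdval] at this
      · exfalso
        have hdn : d + 1 = n := by omega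
        have hne𝒯 : {m | ∃ T : Set (G ⧸ H), T.ncard = m ∧ ¬ SCOn E Tᶜ}.Nonempty := by
          obtain ⟨T, hT⟩ := hcut
          exact ⟨T.ncard, T, rfl, hT⟩
        obtain ⟨T, hTcard, hTsc⟩ := Nat.sInf_mem hne𝒯
        simp only [SCOn, not_forall] at hTsc
        obtain ⟨a, ha, b, hb, hab⟩ := hTsc
        have hab' : a ≠ b := by rintro rfl; exact hab Relation.ReflTransGen.refl
        have h2 : 2 ≤ (Tᶜ).ncard := by
          have : 1 < (Tᶜ).ncard := (Set.one_lt_ncard_iff (Set.toFinite _)).2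
            ⟨a, b, ha, hb, hab'⟩
          omega
        have hTn : T.ncard + Tᶜ.ncard = n := by
          rw [hn, ← Set.ncard_add_ncard_compl T]
        have hκT : kappa E = T.ncard := by rw [hk, ← hTcard]
        omega
    exact le_antisymm hup hlow
  · rw [hEdef] at hcut ⊢
    rw [kappa, if_neg hcut]
    have hbig : ¬ (d + 1 < n) := by
      intro hsmall
      exact hcut ⟨Nout E {((1 : G) : G ⧸ H)}, part_to_cut E (hpart_of hsmall)⟩
    omega
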